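/- arXiv:1402.4718 — 3 statements merged into one kernel-verified Lean document; each statement's English description precedes it below -/
import Mathlib

section
/- Let (T, X) be a tree decomposition of a graph G such that for each node i the torso of X(i) is triconnected, the adhesion is at most two, and each adhesion set is a minimal separator of G or empty. If {x, y} is a minimal separator of G, then for every node i with {x, y} ⊆ X(i), the edge {x, y} is present in the torso of X(i). -/
open SimpleGraph

variable {V : Type*}

/-- Reachability within the subgraph of `G` induced by the vertex set `W`. -/
def ReachIn (G : SimpleGraph V) (W : Set V) (x y : V) : Prop :=
  ∃ (hx : x ∈ W) (hy : y ∈ W), (G.induce W).Reachable ⟨x, hx⟩ ⟨y, hy⟩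

/-- Removing `S` disconnects some connected component of `G`: there are two vertices
outside `S` that are connected in `G` but not in `G - S`. -/
def Separates (G : SimpleGraph V) (S : Set V) : Prop :=
  ∃ u v : V, u ∉ S ∧ v ∉ S ∧ G.Reachable u v ∧ ¬ ReachIn G Sᶜ u v

/-- `S` is a minimal separator of `G`. -/
def IsMinimalSeparator (G : SimpleGraph V) (S : Set V) : Prop :=
  Separates G S ∧ ∀ S' ⊂ S, ¬ Separates G S'

/-- `C` is a connected component of the subgraph of `G` induced by `W`. -/
def IsCompOf (G : SimpleGraph V) (C W : Set V) : Prop :=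
  C ⊆ W ∧ (G.induce C).Connected ∧ ∀ u ∈ C, ∀ v ∈ W, G.Adj u v → v ∈ C

/-- A separation `(A, B)` of a graph `G`. -/
def IsSeparation (G : SimpleGraph V) (A B : Set V) : Prop :=
  A ∪ B = Set.univ ∧ ∀ u ∈ A \ B, ∀ v ∈ B \ A, ¬ G.Adj u v

/-- `(T, X)` is a tree decomposition of `G`. -/
structure IsTreeDecomp {ι : Type*} (G : SimpleGraph V) (T : SimpleGraph ι)
    (X : ι → Set V) : Prop where
  isTree : T.IsTree
  covers_verts : ∀ v : V, ∃ i, v ∈ X i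
  covers_edges : ∀ ⦃u v : V⦄, G.Adj u v → ∃ i, u ∈ X i ∧ v ∈ X i
  subtree : ∀ v : V, (T.induce {i | v ∈ X i}).Connected

/-- The tree decomposition given by the bag function `X` has adhesion at most `d`. -/
def AdhesionLE {ι : Type*} (T : SimpleGraph ι) (X : ι → Set V) (d : ℕ) : Prop :=
  ∀ ⦃i j : ι⦄, T.Adj i j → (X i ∩ X j).ncard ≤ d

/-- The torso of the vertex set `W` in `G`: the induced subgraph `G[W]` with an edge added
between each pair of vertices of `W` connected by a path internally avoiding `W`. -/
def torso (G : SimpleGraph V) (W : Set V) : SimpleGraph W :=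
  SimpleGraph.fromRel (fun u v =>
    G.Adj u v ∨ ∃ p : G.Walk (u : V) (v : V), p.IsPath ∧
      ∀ z ∈ p.support, z ≠ (u : V) → z ≠ (v : V) → z ∉ W)

/-- One smoothing step: `K` is obtained from `H` by replacing the degree-2 vertex `v`,
whose two neighbors are `a` and `b`, by a direct edge between `a` and `b`. -/
def SmoothStep (H K : SimpleGraph.Subgraph (⊤ : SimpleGraph V)) : Prop :=
  ∃ v a b : V, a ≠ b ∧ a ≠ v ∧ b ≠ v ∧ v ∈ H.verts ∧ H.neighborSet v = {a, b} ∧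
    K.verts = H.verts \ {v} ∧
    ∀ x y : V, K.Adj x y ↔ ((H.Adj x y ∧ x ≠ v ∧ y ≠ v) ∨ (x = a ∧ y = b) ∨ (x = b ∧ y = a))

/-- `K` (a graph on a subset of the vertices of `G`) is a topological minor of `G`:
it is obtained from a subgraph of `G` by repeatedly smoothing degree-2 vertices. -/
def IsTopMinor (K : SimpleGraph.Subgraph (⊤ : SimpleGraph V)) (G : SimpleGraph V) : Prop :=
  ∃ H₀ : SimpleGraph.Subgraph (⊤ : SimpleGraph V),
    (∀ ⦃x y : V⦄, H₀.Adj x y → G.Adj x y) ∧ Relation.ReflTransGen SmoothStep H₀ K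

/-- An abstract graph `H` is a topological minor of `G` if it is isomorphic to some
topological minor of `G`. -/
def IsTopMinorGraph {W : Type*} (H : SimpleGraph W) (G : SimpleGraph V) : Prop :=
  ∃ K : SimpleGraph.Subgraph (⊤ : SimpleGraph V), IsTopMinor K G ∧ Nonempty (H ≃g K.coe)

/-- One edge-contraction step: `K` is obtained from `H` by contracting the edge `{a, b}`
(the vertex `b` is merged into `a`). -/
def ContractStep (H K : SimpleGraph.Subgraph (⊤ : SimpleGraph V)) : Prop :=
  ∃ a b : V, H.Adj a b ∧ K.verts = H.verts \ {b} ∧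
    ∀ x y : V, K.Adj x y ↔ (x ≠ b ∧ y ≠ b ∧ x ≠ y ∧
      (H.Adj x y ∨ (x = a ∧ H.Adj b y) ∨ (y = a ∧ H.Adj x b)))

/-- `G` contains `Hpat` as a minor: some graph obtained from a subgraph of `G` by
contracting edges is isomorphic to `Hpat`. -/
def HasMinor {W : Type*} (G : SimpleGraph V) (Hpat : SimpleGraph W) : Prop :=
  ∃ H₀ K : SimpleGraph.Subgraph (⊤ : SimpleGraph V),
    (∀ ⦃x y : V⦄, H₀.Adj x y → G.Adj x y) ∧ Relation.ReflTransGen ContractStep H₀ K ∧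
      Nonempty (Hpat ≃g K.coe)

/-- Planarity, via Wagner's theorem: no `K₅`-minor and no `K₃,₃`-minor. -/
def IsPlanar (G : SimpleGraph V) : Prop :=
  ¬ HasMinor G (completeGraph (Fin 5)) ∧ ¬ HasMinor G (completeBipartiteGraph (Fin 3) (Fin 3))

/-- A graph is triconnected if removing fewer than three vertices cannot disconnect it. -/
def Triconnected (G : SimpleGraph V) : Prop :=
  ∀ S : Set V, S.ncard < 3 → (G.induce Sᶜ).Preconnected

/-- A graph is claw-free if it has no induced `K_{1,3}`. -/
def ClawFree (G : SimpleGraph V) : Prop :=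
  ∀ v a b c : V, G.Adj v a → G.Adj v b → G.Adj v c → a ≠ b → a ≠ c → b ≠ c →
    ¬ G.Adj a b → ¬ G.Adj a c → G.Adj b c

/-!
Let `u, v` be separated by the minimal separator `{x, y}`. Neither `{x}` nor `{y}` separates
them, so the component of `u` in `G - {x, y}` contains a neighbour of `x` and a neighbour of `y`,
and likewise for `v`. If one of these two components misses the bag `X i`, a path from `x` to `y`
through it has no interior vertex in `X i`, which is a torso edge. Otherwise both components meet
`X i`; since the torso is triconnected, these two vertices stay connected in the torso minus
`{x, y}`, and every torso edge between vertices outside `{x, y}` lifts to a path in `G - {x, y}`,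
so `u` and `v` would be connected in `G - {x, y}`.
-/

section

variable {G : SimpleGraph V}

namespace ReachIn

variable {W : Set V} {a b c : V}

lemma refl (h : a ∈ W) : ReachIn G W a a := ⟨h, h, .refl _⟩

lemma symm : ReachIn G W a b → ReachIn G W b a
  | ⟨ha, hb, h⟩ => ⟨hb, ha, h.symm⟩

lemma trans : ReachIn G W a b → ReachIn G W b c → ReachIn G W a c
  | ⟨ha, _, h⟩, ⟨_, hc, h'⟩ => ⟨ha, hc, h.trans h'⟩

lemma mem_right (h : ReachIn G W a b) : b ∈ W := h.2.1

lemma of_adj (ha : a ∈ W) (hb : b ∈ W) (h : G.Adj a b) : ReachIn G W a b :=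
  ⟨ha, hb, Adj.reachable (by simpa using h)⟩

lemma of_walk (p : G.Walk a b) (hp : ∀ z ∈ p.support, z ∈ W) : ReachIn G W a b := by
  induction p with
  | nil => exact refl (hp _ (by simp))
  | cons hadj q ih =>
    exact (of_adj (hp _ (by simp)) (hp _ (by simp)) hadj).trans
      (ih fun z hz => hp z (by simp [hz]))

lemma of_mem_support (p : G.Walk a b) (hp : ∀ z ∈ p.support, z ∈ W) (hc : c ∈ p.support) :
    ReachIn G W a c := by
  classical
  exact of_walk (p.takeUntil c hc) fun z hz => hp z (p.support_takeUntil_subset_support hc hz)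

lemma exists_walk (h : ReachIn G W a b) : ∃ p : G.Walk a b, ∀ z ∈ p.support, z ∈ W := by
  obtain ⟨_, _, ⟨q⟩⟩ := h
  refine ⟨q.map (Embedding.induce W).toHom, fun z hz => ?_⟩
  obtain ⟨w, -, rfl⟩ := List.mem_map.1 (Walk.support_map _ q ▸ hz)
  exact w.2

end ReachIn

section Separators

variable {S : Set V} {s u v : V}

lemma reachIn_compl_of_not_separates (h : ¬ Separates G S) (hu : u ∉ S) (hv : v ∉ S)
    (hr : G.Reachable u v) : ReachIn G Sᶜ u v :=
  by_contra fun h' => h ⟨u, v, hu, hv, hr, h'⟩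

lemma exists_adj_reachIn_of_walk (p : G.Walk u s) (hu : u ≠ s)
    (hp : ∀ z ∈ p.support, z ≠ s → z ∉ S) : ∃ w, G.Adj w s ∧ ReachIn G Sᶜ u w := by
  induction p with
  | nil => exact absurd rfl hu
  | @cons u c s hadj q ih =>
    have huS : u ∉ S := hp u (by simp) hu
    by_cases hcs : c = s
    · subst hcs
      exact ⟨u, hadj, .refl huS⟩
    · obtain ⟨w, hws, hcw⟩ := ih hcs fun z hz => hp z (by simp [hz])
      exact ⟨w, hws, (ReachIn.of_adj huS (hp c (by simp) hcs) hadj).trans hcw⟩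

lemma exists_adj_reachIn_of_not_reachIn_insert (hu : u ∉ insert s S)
    (hS : ReachIn G Sᶜ u v) (hsS : ¬ ReachIn G (insert s S)ᶜ u v) :
    ∃ w, G.Adj w s ∧ ReachIn G (insert s S)ᶜ u w := by
  classical
  obtain ⟨p, hp⟩ := hS.exists_walk
  have hs : s ∈ p.support := by
    by_contra hs
    refine hsS (.of_walk p fun z hz => ?_)
    rw [Set.mem_compl_iff, Set.mem_insert_iff, not_or]
    exact ⟨fun h => hs (h ▸ hz), hp z hz⟩
  refine exists_adj_reachIn_of_walk (p.takeUntil s hs) (fun h => hu (h ▸ Set.mem_insert _ _))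
    fun z hz hzs => ?_
  rw [Set.mem_insert_iff, not_or]
  exact ⟨hzs, hp z (p.support_takeUntil_subset_support hs hz)⟩

lemma IsMinimalSeparator.exists_adj_of_pair {x y : V} (hmin : IsMinimalSeparator G {x, y})
    (hxy : x ≠ y) (hu : u ∉ ({x, y} : Set V)) (hv : v ∉ ({x, y} : Set V))
    (hr : G.Reachable u v) (hnr : ¬ ReachIn G {x, y}ᶜ u v) :
    ∃ a b, G.Adj x a ∧ G.Adj b y ∧ ReachIn G {x, y}ᶜ u a ∧ ReachIn G {x, y}ᶜ u b := by
  obtain ⟨a, hax, ha⟩ := exists_adj_reachIn_of_not_reachIn_insert hu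
    (reachIn_compl_of_not_separates (hmin.2 {y} (Set.ssubset_insert (by simpa)))
      (fun h => hu (Set.mem_insert_of_mem _ h)) (fun h => hv (Set.mem_insert_of_mem _ h)) hr) hnr
  rw [Set.pair_comm] at hmin hu hv hnr
  obtain ⟨b, hby, hb⟩ := exists_adj_reachIn_of_not_reachIn_insert hu
    (reachIn_compl_of_not_separates (hmin.2 {x} (Set.ssubset_insert (by simpa using hxy.symm)))
      (fun h => hu (Set.mem_insert_of_mem _ h)) (fun h => hv (Set.mem_insert_of_mem _ h)) hr) hnr
  exact ⟨a, b, hax.symm, hby, ha, Set.pair_comm y x ▸ hb⟩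

end Separators

section Torso

variable {W : Set V} {x y : V}

lemma torso_adj_of_walk (hx : x ∈ W) (hy : y ∈ W) (hxy : x ≠ y) {a b : V} (hxa : G.Adj x a)
    (hby : G.Adj b y) (p : G.Walk a b) (hp : ∀ z ∈ p.support, z ∉ W) :
    (torso G W).Adj ⟨x, hx⟩ ⟨y, hy⟩ := by
  classical
  let q : G.Walk x y := .cons hxa (p.concat hby)
  have hq : ∀ z ∈ q.support, z ≠ x → z ≠ y → z ∉ W := by
    intro z hz hzx hzy
    simp only [q, Walk.support_cons, Walk.support_concat, List.mem_cons,
      List.mem_append, List.not_mem_nil, or_false] at hz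
    rcases hz with rfl | hz | rfl
    exacts [absurd rfl hzx, hp z hz, absurd rfl hzy]
  rw [torso, fromRel_adj]
  exact ⟨by simpa using hxy, .inl (.inr ⟨q.bypass, q.bypass_isPath,
    fun z hz => hq z (q.support_bypass_subset_support hz)⟩)⟩

lemma torso_adj_of_reachIn_disjoint (hx : x ∈ W) (hy : y ∈ W) (hxy : x ≠ y) {U : Set V}
    {u a b : V} (hxa : G.Adj x a) (hby : G.Adj b y) (ha : ReachIn G U u a)
    (hb : ReachIn G U u b) (hW : ∀ c ∈ W, ¬ ReachIn G U u c) :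
    (torso G W).Adj ⟨x, hx⟩ ⟨y, hy⟩ := by
  obtain ⟨p, hp⟩ := (ha.symm.trans hb).exists_walk
  exact torso_adj_of_walk hx hy hxy hxa hby p fun z hz hzW =>
    hW z hzW (ha.trans (.of_mem_support p hp hz))

/-- A torso edge avoiding `S ⊆ W` comes from an edge of `G` or from a path whose interior lies
outside `W ⊇ S`. -/
lemma ReachIn.of_torso_adj {S : Set V} (hSW : S ⊆ W) {a b : W} (ha : (a : V) ∉ S)
    (hb : (b : V) ∉ S) (h : (torso G W).Adj a b) : ReachIn G Sᶜ a b := by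
  have key : ∀ a b : W, (a : V) ∉ S → (b : V) ∉ S → (G.Adj a b ∨ ∃ p : G.Walk a b, p.IsPath ∧
      ∀ z ∈ p.support, z ≠ a → z ≠ b → z ∉ W) → ReachIn G Sᶜ a b := by
    rintro a b ha hb (h | ⟨p, -, hp⟩)
    · exact .of_adj ha hb h
    · exact .of_walk p fun z hz hzS =>
        hp z hz (fun h => ha (h ▸ hzS)) (fun h => hb (h ▸ hzS)) (hSW hzS)
  rw [torso, fromRel_adj] at h
  rcases h with ⟨-, h | h⟩
  exacts [key a b ha hb h, (key b a hb ha h).symm]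

lemma ReachIn.of_reachable_torso_induce {S : Set W} {a b : ↥Sᶜ}
    (h : ((torso G W).induce Sᶜ).Reachable a b) : ReachIn G (Subtype.val '' S)ᶜ a b := by
  have hmem (c : ↥Sᶜ) : ((c : W) : V) ∉ Subtype.val '' S :=
    Subtype.val_injective.mem_set_image.not.2 c.2
  obtain ⟨p⟩ := h
  induction p with
  | nil => exact .refl (hmem _)
  | cons hadj _ ih =>
    exact (ReachIn.of_torso_adj (Subtype.coe_image_subset _ _) (hmem _) (hmem _)
      (by simpa using hadj)).trans ih

lemma Triconnected.reachIn_torso (htri : Triconnected (torso G W)) (hx : x ∈ W) (hy : y ∈ W)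
    {c d : V} (hc : c ∈ W) (hd : d ∈ W) (hcxy : c ∉ ({x, y} : Set V))
    (hdxy : d ∉ ({x, y} : Set V)) : ReachIn G {x, y}ᶜ c d := by
  let S : Set W := {⟨x, hx⟩, ⟨y, hy⟩}
  have hS : S.ncard < 3 :=
    (Set.ncard_insert_le _ _).trans_lt (by rw [Set.ncard_singleton]; norm_num)
  have hnotin {e : V} (he : e ∈ W) (hexy : e ∉ ({x, y} : Set V)) : (⟨e, he⟩ : W) ∈ Sᶜ := by
    simpa [S, Subtype.ext_iff] using hexy
  have := ReachIn.of_reachable_torso_induce (htri S hS ⟨_, hnotin hc hcxy⟩ ⟨_, hnotin hd hdxy⟩)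
  rwa [Set.image_pair] at this

end Torso

end

theorem minimalSep_edge_in_torso_general {ι : Type*}
    (G : SimpleGraph V) (X : ι → Set V)
    (htri : ∀ i, Triconnected (torso G (X i)))
    (x y : V) (hxy : x ≠ y) (hsep : IsMinimalSeparator G {x, y}) :
    ∀ (i : ι) (hx : x ∈ X i) (hy : y ∈ X i), (torso G (X i)).Adj ⟨x, hx⟩ ⟨y, hy⟩ := by
  intro i hx hy
  obtain ⟨u, v, hu, hv, hr, hnr⟩ := hsep.1
  by_cases hU : ∀ c ∈ X i, ¬ ReachIn G {x, y}ᶜ u c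
  · obtain ⟨a, b, hxa, hby, ha, hb⟩ := hsep.exists_adj_of_pair hxy hu hv hr hnr
    exact torso_adj_of_reachIn_disjoint hx hy hxy hxa hby ha hb hU
  by_cases hV : ∀ c ∈ X i, ¬ ReachIn G {x, y}ᶜ v c
  · obtain ⟨a, b, hxa, hby, ha, hb⟩ := hsep.exists_adj_of_pair hxy hv hu hr.symm (mt ReachIn.symm hnr)
    exact torso_adj_of_reachIn_disjoint hx hy hxy hxa hby ha hb hV
  push Not at hU hV
  obtain ⟨c, hc, huc⟩ := hU
  obtain ⟨d, hd, hvd⟩ := hV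
  have hcd := (htri i).reachIn_torso hx hy hc hd huc.mem_right hvd.mem_right
  exact absurd (huc.trans (hcd.trans hvd.symm)) hnr

/-- In a Tutte decomposition (triconnected torsos that are topological minors, adhesion at
most two, adhesion sets minimal separators or empty), every minimal separator `{x, y}`
of `G` induces the edge `{x, y}` in the torso of each bag containing both `x` and `y`. -/
theorem minimalSep_edge_in_torso [Fintype V] {ι : Type*} [Fintype ι]
    (G : SimpleGraph V) (T : SimpleGraph ι) (X : ι → Set V)
    (hTD : IsTreeDecomp G T X) (hadh : AdhesionLE T X 2)
    (htri : ∀ i, Triconnected (torso G (X i)))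
    (htm : ∀ i, IsTopMinorGraph (torso G (X i)) G)
    (hmin : ∀ ⦃i j : ι⦄, T.Adj i j → IsMinimalSeparator G (X i ∩ X j) ∨ X i ∩ X j = ∅)
    (x y : V) (hxy : x ≠ y) (hsep : IsMinimalSeparator G {x, y}) :
    ∀ (i : ι) (hx : x ∈ X i) (hy : y ∈ X i), (torso G (X i)).Adj ⟨x, hx⟩ ⟨y, hy⟩ :=
  minimalSep_edge_in_torso_general G X htri x y hxy hsep
end

section
/- Let G be a connected graph without cut vertices, let {u, v} be a separation pair of G, and let C be a connected component of G - {u, v}. Then there is a uv-path in G all of whose internal vertices belong to C. -/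
/-!
Some vertex `w` lies outside `C ∪ {u, v}`, because `{u, v}` separates. If `u` had no
neighbour in `C`, then `C` would be closed under adjacency in `G - v` and `v` would separate
`C` from `w`; so `u`, and symmetrically `v`, has a neighbour in `C`, and these two neighbours
are joined by a path inside the connected set `C`.
-/

open SimpleGraph

variable {V : Type*}

section

variable {G : SimpleGraph V}

lemma ReachIn.mem_of_adj_closed {W C : Set V} (hC : ∀ a ∈ C, ∀ b ∈ W, G.Adj a b → b ∈ C)
    {x y : V} (h : ReachIn G W x y) (hx : x ∈ C) : y ∈ C := by
  obtain ⟨_, _, ⟨p⟩⟩ := h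
  have hwalk : ∀ {a b : W} (q : (G.induce W).Walk a b), (a : V) ∈ C → (b : V) ∈ C := by
    intro a b q
    induction q with
    | nil => exact id
    | cons h _ ih => exact fun ha => ih (hC _ ha _ (Subtype.mem _) h)
  exact hwalk p hx

lemma IsCompOf.reachIn {C W : Set V} (hC : IsCompOf G C W) {x y : V} (hx : x ∈ C)
    (hy : y ∈ C) : ReachIn G W x y :=
  ⟨hC.1 hx, hC.1 hy, (hC.2.1.preconnected ⟨x, hx⟩ ⟨y, hy⟩).map (G.induceHomOfLE hC.1).toHom⟩

lemma IsCompOf.exists_notMem_of_separates {C S : Set V} (hC : IsCompOf G C Sᶜ)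
    (hS : Separates G S) : ∃ w, w ∉ C ∧ w ∉ S := by
  obtain ⟨x, y, hx, hy, -, hxy⟩ := hS
  by_contra! h
  have hmem : ∀ z ∉ S, z ∈ C := fun z hz => by_contra fun hzC => hz (h z hzC)
  exact hxy (hC.reachIn (hmem x hx) (hmem y hy))

lemma IsCompOf.exists_adj_of_not_separates {C : Set V} {u v w : V} (hconn : G.Connected)
    (hv : ¬ Separates G {v}) (hC : IsCompOf G C {u, v}ᶜ) (hwC : w ∉ C) (hwv : w ≠ v) :
    ∃ c ∈ C, G.Adj u c := by
  by_contra! hu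
  obtain ⟨⟨c, hc⟩⟩ := hC.2.1.nonempty
  have hclosed : ∀ a ∈ C, ∀ b ∈ ({v} : Set V)ᶜ, G.Adj a b → b ∈ C := by
    intro a ha b hbv hab
    refine hC.2.2 a ha b ?_ hab
    rintro (rfl | rfl)
    exacts [hu a ha hab.symm, hbv rfl]
  have hcv : c ≠ v := fun h => hC.1 hc (Or.inr h)
  exact hv ⟨c, w, hcv, hwv, hconn c w, fun h => hwC (h.mem_of_adj_closed hclosed hc)⟩

lemma SimpleGraph.Preconnected.exists_walk_support_subset {C : Set V}
    (hC : (G.induce C).Preconnected) {a b : V} (ha : a ∈ C) (hb : b ∈ C) :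
    ∃ q : G.Walk a b, ∀ z ∈ q.support, z ∈ C := by
  obtain ⟨q⟩ := hC ⟨a, ha⟩ ⟨b, hb⟩
  refine ⟨q.map (Embedding.induce C).toHom, fun z hz => ?_⟩
  obtain ⟨z', -, rfl⟩ := List.mem_map.mp (Walk.support_map _ q ▸ hz)
  exact z'.2

lemma SimpleGraph.Preconnected.exists_isPath_through {C : Set V}
    (hC : (G.induce C).Preconnected) {u v a b : V} (hua : G.Adj u a) (ha : a ∈ C)
    (hvb : G.Adj v b) (hb : b ∈ C) :
    ∃ p : G.Walk u v, p.IsPath ∧ ∀ z ∈ p.support, z ≠ u → z ≠ v → z ∈ C := by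
  classical
  obtain ⟨q, hqC⟩ := hC.exists_walk_support_subset ha hb
  let p : G.Walk u v := .cons hua (q.concat hvb.symm)
  refine ⟨p.toPath, p.toPath.2, fun z hz hzu hzv => ?_⟩
  have hzp := Walk.support_toPath_subset_support p hz
  simp only [p, Walk.support_cons, Walk.support_concat, List.mem_cons, List.mem_append,
    List.not_mem_nil, or_false] at hzp
  rcases hzp with rfl | hzq | rfl
  exacts [absurd rfl hzu, hqC z hzq, absurd rfl hzv]

end

theorem uvPath_through_component_general (G : SimpleGraph V)
    (hconn : G.Connected) (hnocut : ∀ w : V, ¬ Separates G {w})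
    (u v : V) (hsp : Separates G {u, v})
    (C : Set V) (hC : IsCompOf G C {u, v}ᶜ) :
    ∃ p : G.Walk u v, p.IsPath ∧ ∀ z ∈ p.support, z ≠ u → z ≠ v → z ∈ C := by
  obtain ⟨w, hwC, hwuv⟩ := hC.exists_notMem_of_separates hsp
  simp only [Set.mem_insert_iff, Set.mem_singleton_iff, not_or] at hwuv
  obtain ⟨a, ha, hua⟩ := hC.exists_adj_of_not_separates hconn (hnocut v) hwC hwuv.2
  have hC' : IsCompOf G C {v, u}ᶜ := Set.pair_comm u v ▸ hC
  obtain ⟨b, hb, hvb⟩ := hC'.exists_adj_of_not_separates hconn (hnocut u) hwC hwuv.1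
  exact hC.2.1.preconnected.exists_isPath_through hua ha hvb hb

/-- In a connected graph without cut vertices with separation pair `{u, v}`, every
connected component `C` of `G - {u, v}` admits a `uv`-path whose internal vertices all
belong to `C`. -/
theorem uvPath_through_component [Fintype V] (G : SimpleGraph V)
    (hconn : G.Connected) (hnocut : ∀ w : V, ¬ Separates G {w})
    (u v : V) (huv : u ≠ v) (hsp : Separates G {u, v})
    (C : Set V) (hC : IsCompOf G C {u, v}ᶜ) :
    ∃ p : G.Walk u v, p.IsPath ∧ ∀ z ∈ p.support, z ≠ u → z ≠ v → z ∈ C :=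
  uvPath_through_component_general G hconn hnocut u v hsp C hC
end

section
/- Let G be a graph with a separation pair {u, v}, let C be a connected component of G - {u, v}, and let C' be the graph obtained from G[V(C) ∪ {u, v}] by adding the edge {u, v} if absent. If p and q are distinct vertices of C' and P is a pq-path in G, then there is a pq-path P' in C' whose vertex set is a subset of the vertex set of P. -/
open SimpleGraph

variable {V : Type*}

/-- The graph `C'` obtained from `G[V(C) ∪ {u, v}]` by adding the edge `{u, v}`
if it is absent. -/
def CPrime (G : SimpleGraph V) (C : Set V) (u v : V) : SimpleGraph ↥(C ∪ {u, v}) :=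
  SimpleGraph.fromRel (fun a b => G.Adj a b ∨ ((a : V) = u ∧ (b : V) = v))

/-- A vertex of `C ∪ {u,v}` adjacent to a vertex outside `C ∪ {u,v}` must be `u` or `v`. -/
lemma boundary_mem_uv (G : SimpleGraph V) (u v : V) (C : Set V)
    (hC : IsCompOf G C {u, v}ᶜ) {a b : V} (ha : a ∈ C ∪ {u, v})
    (hb : b ∉ C ∪ {u, v}) (hab : G.Adj a b) : a = u ∨ a = v := by
  rcases ha with haC | hauv
  · exfalso
    have hbuv : b ∈ ({u, v} : Set V)ᶜ := fun h => hb (Or.inr h)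
    exact hb (Or.inl (hC.2.2 a haC b hbuv hab))
  · simpa using hauv

/-- Along a path from outside `C ∪ {u,v}` to inside, the first entry point is `u` or `v`. -/
lemma enter_aux (G : SimpleGraph V) (u v : V) (C : Set V)
    (hC : IsCompOf G C {u, v}ᶜ) (w y : V) (P' : G.Walk w y) :
    P'.IsPath → w ∉ C ∪ {u, v} → y ∈ C ∪ {u, v} →
    ∃ t, (t = u ∨ t = v) ∧ t ∈ P'.support ∧
      ∃ Pt : G.Walk t y, Pt.IsPath ∧ Pt.length ≤ P'.length ∧
        ∀ z ∈ Pt.support, z ∈ P'.support := by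
  induction P' with
  | nil => exact fun _ hw hy => absurd hy hw
  | @cons a b c hadj rest ih =>
    intro hP hw hy
    by_cases hb : b ∈ C ∪ {u, v}
    · have hbuv : b = u ∨ b = v := boundary_mem_uv G u v C hC hb hw hadj.symm
      refine ⟨b, hbuv, ?_, rest, hP.of_cons, ?_, ?_⟩
      · simp [SimpleGraph.Walk.support_cons, rest.start_mem_support]
      · simp [SimpleGraph.Walk.length_cons]
      · intro z hz
        simp [SimpleGraph.Walk.support_cons, hz]
    · obtain ⟨t, htuv, hts, Pt, hPt, hlen, hsub⟩ := ih hP.of_cons hb hy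
      refine ⟨t, htuv, ?_, Pt, hPt, ?_, ?_⟩
      · simp [SimpleGraph.Walk.support_cons, hts]
      · simp [SimpleGraph.Walk.length_cons]; omega
      · intro z hz
        simp [SimpleGraph.Walk.support_cons, hsub z hz]

/-- Main auxiliary lemma: any path in `G` between vertices of `C ∪ {u,v}` gives rise to a
walk in `CPrime` supported inside the path's support. -/
lemma walk_aux (G : SimpleGraph V) (u v : V) (huv : u ≠ v) (C : Set V)
    (hC : IsCompOf G C {u, v}ᶜ) :
    ∀ n (x y : V) (hx : x ∈ C ∪ {u, v}) (hy : y ∈ C ∪ {u, v}) (P : G.Walk x y),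
      P.length ≤ n → P.IsPath →
      ∃ Q : (CPrime G C u v).Walk ⟨x, hx⟩ ⟨y, hy⟩, ∀ z ∈ Q.support, (z : V) ∈ P.support := by
  intro n
  induction n with
  | zero =>
    intro x y hx hy P hlen _
    cases P with
    | nil => exact ⟨SimpleGraph.Walk.nil, by simp⟩
    | cons h rest => simp [SimpleGraph.Walk.length_cons] at hlen
  | succ n ih =>
    intro x y hx hy P hlen hP
    cases P with
    | nil => exact ⟨SimpleGraph.Walk.nil, by simp⟩
    | @cons _ w _ hadj rest =>
      have hlen' : rest.length ≤ n := by
        simp [SimpleGraph.Walk.length_cons] at hlen; omega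
      by_cases hw : w ∈ C ∪ {u, v}
      · obtain ⟨Q', hQ'⟩ := ih w y hw hy rest hlen' hP.of_cons
        have hedge : (CPrime G C u v).Adj ⟨x, hx⟩ ⟨w, hw⟩ := by
          refine ⟨?_, Or.inl (Or.inl hadj)⟩
          exact fun h => hadj.ne (congrArg Subtype.val h)
        refine ⟨SimpleGraph.Walk.cons hedge Q', ?_⟩
        intro z hz
        rw [SimpleGraph.Walk.support_cons] at hz
        rcases List.mem_cons.mp hz with rfl | hz
        · exact (SimpleGraph.Walk.cons hadj rest).start_mem_support
        · simp [SimpleGraph.Walk.support_cons, hQ' z hz]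
      · have hxuv : x = u ∨ x = v := boundary_mem_uv G u v C hC hx hw hadj
        obtain ⟨t, htuv, hts, Pt, hPt, hlent, hsub⟩ :=
          enter_aux G u v C hC w y rest hP.of_cons hw hy
        have ht : t ∈ C ∪ {u, v} := Or.inr (by rcases htuv with rfl | rfl <;> simp)
        obtain ⟨Q', hQ'⟩ := ih t y ht hy Pt (le_trans hlent hlen') hPt
        have hxt : x ≠ t := by
          rintro rfl
          exact ((SimpleGraph.Walk.cons_isPath_iff hadj rest).mp hP).2 hts
        have hedge : (CPrime G C u v).Adj ⟨x, hx⟩ ⟨t, ht⟩ := by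
          refine ⟨fun h => hxt (congrArg Subtype.val h), ?_⟩
          rcases hxuv with rfl | rfl <;> rcases htuv with rfl | rfl
          · exact absurd rfl hxt
          · exact Or.inl (Or.inr ⟨rfl, rfl⟩)
          · exact Or.inr (Or.inr ⟨rfl, rfl⟩)
          · exact absurd rfl hxt
        refine ⟨SimpleGraph.Walk.cons hedge Q', ?_⟩
        intro z hz
        rw [SimpleGraph.Walk.support_cons] at hz
        rcases List.mem_cons.mp hz with rfl | hz
        · exact (SimpleGraph.Walk.cons hadj rest).start_mem_support
        · simp [SimpleGraph.Walk.support_cons, hsub _ (hQ' z hz)]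

/-- If `{u, v}` is a separation pair of `G`, `C` a component of `G - {u, v}`, `C'` as
above, and `P` a `pq`-path in `G` between two vertices of `C'`, then there is a
`pq`-path in `C'` whose vertex set is a subset of that of `P`. -/
theorem path_shortcut_through_CPrime [Fintype V] (G : SimpleGraph V)
    (hconn : G.Connected) (u v : V) (huv : u ≠ v) (hsp : Separates G {u, v})
    (C : Set V) (hC : IsCompOf G C {u, v}ᶜ)
    (p q : ↥(C ∪ {u, v})) (hpq : p ≠ q)
    (P : G.Walk (p : V) (q : V)) (hP : P.IsPath) :
    ∃ P' : (CPrime G C u v).Walk p q, P'.IsPath ∧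
      ∀ z ∈ P'.support, (z : V) ∈ P.support := by
  classical
  obtain ⟨Q, hQ⟩ := walk_aux G u v huv C hC P.length (p : V) (q : V) p.2 q.2 P le_rfl hP
  exact ⟨Q.toPath, Q.toPath.2, fun z hz => hQ z (Q.support_toPath_subset hz)⟩
end
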